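/- arXiv:1912.11943 — 3 statements merged into one kernel-verified Lean document; each statement's English description precedes it below -/
import Mathlib

section
/- Lipschitz continuity in y and structure of the gradient Ĥ: Let X ∈ ℝ^{n×p} be fixed and g : ℝ^p → ℝ convex, and for each y ∈ ℝⁿ let β̂(y) be a minimizer of b ↦ ‖y − Xb‖²/(2n) + g(b) (assumed to exist). Then: (i) for all y, ỹ ∈ ℝⁿ and all choices of minimizers, ‖X(β̂(y) − β̂(ỹ))‖ ≤ ‖y − ỹ‖, so the map y ↦ Xβ̂(y) is well-defined and 1-Lipschitz; (ii) for Lebesgue-almost every y ∈ ℝⁿ, the map y ↦ Xβ̂(y) is Fréchet differentiable at y with gradient Ĥ ∈ ℝ^{n×n} (i.e. Xβ̂(y + η) = Xβ̂(y) + Ĥᵀη + o(‖η‖)) that is symmetric positive semidefinite with all eigenvalues in [0, 1]; consequently, with d̂f = tr(Ĥ), one has (n − d̂f)(1 − d̂f/n) ≤ ‖I_n − Ĥ‖_F² ≤ n − d̂f. -/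
/-!
The first-order optimality condition of the convex problem makes `y ↦ Xβ̂(y)` firmly
nonexpansive: `‖Xβ̂(y) - Xβ̂(y')‖² ≤ ⟪Xβ̂(y) - Xβ̂(y'), y - y'⟫`. This gives (i), and through
Rademacher's theorem differentiability almost everywhere. Firm nonexpansiveness passes to the
derivative `Ĥ` and to `I - Ĥ`; once `Ĥ` is symmetric this makes both positive semidefinite, and on
the basis vectors it reads `‖(I - Ĥ)eⱼ‖² ≤ (I - Ĥ)ⱼⱼ`, whence `‖I - Ĥ‖_F² ≤ tr (I - Ĥ)`. The
symmetry holds because `y - Xβ̂(y)` is `n` times the gradient of the optimal value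
`y ↦ min_b obj(y, b)`, so that `I - Ĥ` is a Hessian. The lower bound is Cauchy–Schwarz on the
diagonal of `I - Ĥ`.
-/

open MeasureTheory Matrix
open scoped ENNReal NNReal Topology

noncomputable section

/-- Penalized least-squares objective `b ↦ ‖y − Xb‖²/(2n) + g(b)`. -/
def obj {n p : ℕ} (g : (Fin p → ℝ) → ℝ) (y : Fin n → ℝ) (X : Matrix (Fin n) (Fin p) ℝ)
    (b : Fin p → ℝ) : ℝ :=
  (∑ i, (y i - X.mulVec b i) ^ 2) / (2 * (n : ℝ)) + g b

/-- The continuous linear map `v ↦ Mv`. -/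
def mulVecCLM {m k : Type*} [Fintype m] [Fintype k] (M : Matrix m k ℝ) :
    (k → ℝ) →L[ℝ] (m → ℝ) :=
  LinearMap.toContinuousLinearMap M.mulVecLin

/-- Squared Frobenius norm of a matrix. -/
def frobSq {n : ℕ} (M : Matrix (Fin n) (Fin n) ℝ) : ℝ := ∑ i, ∑ j, M i j ^ 2

lemma le_of_forall_pos_le_add_mul {a b c : ℝ} (h : ∀ t : ℝ, 0 < t → t ≤ 1 → a ≤ b + t * c) :
    a ≤ b := by
  have hlim : Filter.Tendsto (fun t : ℝ => b + t * c) (𝓝[>] 0) (𝓝 b) :=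
    ((continuous_const.add (continuous_id.mul continuous_const)).tendsto' 0 b (by simp)).mono_left
      nhdsWithin_le_nhds
  exact ge_of_tendsto hlim
    (Filter.eventually_of_mem (Ioc_mem_nhdsGT one_pos) fun t ht => h t ht.1 ht.2)

section DotProduct

variable {ι : Type*} [Fintype ι]

def IsFirmlyNonexpansive (F : (ι → ℝ) → ι → ℝ) : Prop :=
  ∀ x y, (F x - F y) ⬝ᵥ (F x - F y) ≤ (F x - F y) ⬝ᵥ (x - y)

lemma dotProduct_self_le_of_dotProduct_self_le_dotProduct {u w : ι → ℝ}
    (h : u ⬝ᵥ u ≤ u ⬝ᵥ w) : u ⬝ᵥ u ≤ w ⬝ᵥ w := by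
  have := dotProduct_self_star_nonneg (w - u)
  simp only [star_trivial, sub_dotProduct, dotProduct_sub, dotProduct_comm w u] at this
  linarith

lemma dist_toLp_eq_sqrt_dotProduct (x y : ι → ℝ) :
    dist (WithLp.toLp 2 x) (WithLp.toLp 2 y) = √((x - y) ⬝ᵥ (x - y)) := by
  simp [EuclideanSpace.dist_eq, Real.dist_eq, dotProduct, sq]

def dotProductCLM : (ι → ℝ) →L[ℝ] (ι → ℝ) →L[ℝ] ℝ :=
  (dotProductBilin ℝ ℝ).toContinuousBilinearMap

@[simp] lemma dotProductCLM_apply (v w : ι → ℝ) :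
    dotProductCLM v w = v ⬝ᵥ w := rfl

lemma dotProduct_self_le_card_mul_norm_sq (v : ι → ℝ) :
    v ⬝ᵥ v ≤ Fintype.card ι * ‖v‖ ^ 2 := by
  calc v ⬝ᵥ v = ∑ i, |v i| ^ 2 := by simp [dotProduct, sq]
    _ ≤ ∑ _i : ι, ‖v‖ ^ 2 := Finset.sum_le_sum fun i _ => by
        gcongr; simpa [Real.norm_eq_abs] using norm_le_pi_norm v i
    _ = Fintype.card ι * ‖v‖ ^ 2 := by simp

namespace IsFirmlyNonexpansive

variable {F : (ι → ℝ) → ι → ℝ}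

lemma dotProduct_self_le (hF : IsFirmlyNonexpansive F) (x y : ι → ℝ) :
    (F x - F y) ⬝ᵥ (F x - F y) ≤ (x - y) ⬝ᵥ (x - y) :=
  dotProduct_self_le_of_dotProduct_self_le_dotProduct (hF x y)

lemma dotProduct_nonneg (hF : IsFirmlyNonexpansive F) (x y : ι → ℝ) :
    0 ≤ (F x - F y) ⬝ᵥ (x - y) :=
  (dotProduct_self_star_nonneg _).trans (hF x y)

lemma map_dotProduct_le (hF : IsFirmlyNonexpansive F) (h0 : F 0 = 0) (v : ι → ℝ) :
    F v ⬝ᵥ F v ≤ F v ⬝ᵥ v := by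
  simpa [h0] using hF v 0

lemma id_sub (hF : IsFirmlyNonexpansive F) : IsFirmlyNonexpansive fun x => x - F x := by
  intro x y
  have h := hF x y
  have hxy : x - F x - (y - F y) = (x - y) - (F x - F y) := by abel
  rw [hxy]
  generalize F x - F y = u at h ⊢
  generalize x - y = w at h ⊢
  simp only [sub_dotProduct, dotProduct_sub, dotProduct_comm w u] at h ⊢
  linarith

lemma lipschitzWith_euclidean (hF : IsFirmlyNonexpansive F) :
    LipschitzWith 1 fun x : EuclideanSpace ℝ ι => WithLp.toLp 2 (F x.ofLp) :=
  LipschitzWith.of_dist_le_mul fun x y => by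
    rw [NNReal.coe_one, one_mul, dist_toLp_eq_sqrt_dotProduct, ← WithLp.toLp_ofLp 2 x,
      ← WithLp.toLp_ofLp 2 y, dist_toLp_eq_sqrt_dotProduct]
    exact Real.sqrt_le_sqrt (hF.dotProduct_self_le _ _)

theorem ae_differentiableAt (hF : IsFirmlyNonexpansive F) :
    ∀ᵐ x ∂(volume : Measure (ι → ℝ)), DifferentiableAt ℝ F x :=
  ((PiLp.lipschitzWith_ofLp 2 _).comp
    (hF.lipschitzWith_euclidean.comp (PiLp.lipschitzWith_toLp 2 _))).ae_differentiableAt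

lemma _root_.HasFDerivAt.isFirmlyNonexpansive {D : (ι → ℝ) →L[ℝ] ι → ℝ} {x : ι → ℝ}
    (hD : HasFDerivAt F D x) (hF : IsFirmlyNonexpansive F) : IsFirmlyNonexpansive D := by
  suffices h : ∀ u, D u ⬝ᵥ D u ≤ D u ⬝ᵥ u by
    intro v w
    simpa only [← map_sub] using h (v - w)
  intro u
  have hline : HasDerivAt (fun t : ℝ => x + t • u) u 0 := by
    simpa using ((hasDerivAt_id (0 : ℝ)).smul_const u).const_add x
  have hφ : HasDerivAt (fun t : ℝ => F (x + t • u)) (D u) 0 :=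
    (by simpa using hD : HasFDerivAt F D (x + (0 : ℝ) • u)).comp_hasDerivAt 0 hline
  refine (isClosed_le (continuous_id.dotProduct continuous_id)
    (continuous_id.dotProduct continuous_const)).mem_of_tendsto
    (hasDerivAt_iff_tendsto_slope.mp hφ) (eventually_nhdsWithin_of_forall fun t ht => ?_)
  -- firm nonexpansiveness between `x + t • u` and `x`, divided by `t²`
  have key := hF (x + t • u) x
  rw [add_sub_cancel_left, dotProduct_smul, smul_eq_mul] at key
  simp only [Set.mem_ofPred_eq, id, slope_def_module, sub_zero, zero_smul, add_zero,
    smul_dotProduct, dotProduct_smul, smul_eq_mul]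
  generalize F (x + t • u) - F x = d at key ⊢
  calc t⁻¹ * (t⁻¹ * (d ⬝ᵥ d)) = (t⁻¹ * t⁻¹) * (d ⬝ᵥ d) := by ring
    _ ≤ (t⁻¹ * t⁻¹) * (t * (d ⬝ᵥ u)) := by gcongr; exact mul_self_nonneg _
    _ = t⁻¹ * (d ⬝ᵥ u) := by field_simp

end IsFirmlyNonexpansive

lemma Matrix.isSymm_of_mulVec_dotProduct_comm [DecidableEq ι]
    {M : Matrix ι ι ℝ} (h : ∀ v w, M *ᵥ v ⬝ᵥ w = M *ᵥ w ⬝ᵥ v) : M.IsSymm :=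
  IsSymm.ext fun i j => by
    simpa [mulVec_single_one, dotProduct_single] using h (Pi.single i 1) (Pi.single j 1)

lemma Matrix.posSemidef_of_isFirmlyNonexpansive {M : Matrix ι ι ℝ} (hS : M.IsSymm) (hM : IsFirmlyNonexpansive (M *ᵥ ·)) : M.PosSemidef :=
  .of_dotProduct_mulVec_nonneg (isHermitian_iff_isSymm.mpr hS) fun x => by
    simpa [dotProduct_comm] using hM.dotProduct_nonneg x 0

end DotProduct

section FrobeniusNorm

variable {n : ℕ}

lemma Matrix.trace_sq_le_mul_frobSq (M : Matrix (Fin n) (Fin n) ℝ) :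
    M.trace ^ 2 ≤ n * frobSq M := by
  calc M.trace ^ 2 ≤ n * ∑ i, M i i ^ 2 := by
        simpa [trace] using sq_sum_le_card_mul_sum_sq (s := Finset.univ) (f := fun i => M i i)
    _ ≤ n * frobSq M := by
        gcongr
        exact Finset.sum_le_sum fun i _ =>
          Finset.single_le_sum (fun j _ => sq_nonneg (M i j)) (Finset.mem_univ i)

lemma Matrix.sub_trace_mul_le_frobSq_one_sub (H : Matrix (Fin n) (Fin n) ℝ) :
    ((n : ℝ) - H.trace) * (1 - H.trace / n) ≤ frobSq (1 - H) := by
  rcases eq_or_ne n 0 with rfl | hn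
  · simp [Matrix.trace, frobSq]
  have htr : (1 - H).trace = n - H.trace := by simp [trace_sub]
  have hn' : (0 : ℝ) < n := by positivity
  calc ((n : ℝ) - H.trace) * (1 - H.trace / n) = (1 - H).trace ^ 2 / n := by
        rw [htr]; field_simp
    _ ≤ frobSq (1 - H) := by
        rw [div_le_iff₀ hn', mul_comm]; exact (1 - H).trace_sq_le_mul_frobSq

lemma Matrix.frobSq_le_trace {M : Matrix (Fin n) (Fin n) ℝ}
    (hM : IsFirmlyNonexpansive (M *ᵥ ·)) : frobSq M ≤ M.trace := by
  have hcol : ∀ j, ∑ i, M i j ^ 2 ≤ M j j := fun j => by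
    have h := hM.map_dotProduct_le (mulVec_zero M) (Pi.single j 1)
    simp only [mulVec_single_one, dotProduct_single, col_apply, mul_one] at h
    simpa [dotProduct, sq] using h
  calc frobSq M = ∑ j, ∑ i, M i j ^ 2 := Finset.sum_comm
    _ ≤ M.trace := Finset.sum_le_sum fun j _ => hcol j

end FrobeniusNorm

section PenalizedLeastSquares

variable {n p : ℕ} {X : Matrix (Fin n) (Fin p) ℝ} {g : (Fin p → ℝ) → ℝ}

lemma obj_eq_dotProduct (y : Fin n → ℝ) (b : Fin p → ℝ) :
    obj g y X b = (y - X *ᵥ b) ⬝ᵥ (y - X *ᵥ b) / (2 * n) + g b := by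
  simp [obj, dotProduct, sq]

lemma obj_add_left (y h : Fin n → ℝ) (b : Fin p → ℝ) :
    obj g (y + h) X b = obj g y X b + (2 * ((y - X *ᵥ b) ⬝ᵥ h) + h ⬝ᵥ h) / (2 * n) := by
  rw [obj_eq_dotProduct, obj_eq_dotProduct, add_sub_right_comm]
  simp only [add_dotProduct, dotProduct_add, dotProduct_comm h]
  ring

lemma residual_dotProduct_le_of_isMinOn (hg : ConvexOn ℝ Set.univ g) {y : Fin n → ℝ}
    {b : Fin p → ℝ} (hb : IsMinOn (obj g y X) Set.univ b) (b' : Fin p → ℝ) :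
    (y - X *ᵥ b) ⬝ᵥ (X *ᵥ b' - X *ᵥ b) ≤ n * (g b' - g b) := by
  rcases eq_or_ne n 0 with rfl | hn
  · simp [dotProduct]
  have hn' : (0 : ℝ) < n := by positivity
  refine le_of_forall_pos_le_add_mul (c := (X *ᵥ b' - X *ᵥ b) ⬝ᵥ (X *ᵥ b' - X *ᵥ b) / 2)
    fun t ht ht1 => ?_
  have hmin : obj g y X b ≤ obj g y X (b + t • (b' - b)) := hb (Set.mem_univ _)
  have hres : y - X *ᵥ (b + t • (b' - b)) = (y - X *ᵥ b) - t • (X *ᵥ b' - X *ᵥ b) := by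
    simp only [mulVec_add, mulVec_smul, mulVec_sub]; abel
  have hconv : g (b + t • (b' - b)) ≤ (1 - t) * g b + t * g b' := by
    have := hg.2 (Set.mem_univ b) (Set.mem_univ b') (sub_nonneg.mpr ht1) ht.le (by ring)
    simpa [smul_sub, sub_smul, one_smul, add_sub, add_sub_right_comm] using this
  rw [obj_eq_dotProduct, obj_eq_dotProduct, hres] at hmin
  generalize y - X *ᵥ b = r at hmin ⊢
  generalize X *ᵥ b' - X *ᵥ b = d at hmin ⊢
  simp only [sub_dotProduct, dotProduct_sub, smul_dotProduct, dotProduct_smul, smul_eq_mul,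
    dotProduct_comm d r] at hmin
  -- `hmin`: `r⬝r/2n + g b ≤ (r⬝r - 2t r⬝d + t² d⬝d)/2n + g bₜ`; with `hconv`, divide by `t/n`
  have key : t * (2 * (r ⬝ᵥ d)) ≤ t * (2 * (n * (g b' - g b)) + t * (d ⬝ᵥ d)) := by
    rw [div_add' _ _ _ (by positivity), div_add' _ _ _ (by positivity),
      div_le_div_iff_of_pos_right (by positivity)] at hmin
    nlinarith
  linarith [le_of_mul_le_mul_left key ht]

lemma mulVec_sub_dotProduct_le_of_isMinOn (hg : ConvexOn ℝ Set.univ g) {y y' : Fin n → ℝ}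
    {b b' : Fin p → ℝ} (hb : IsMinOn (obj g y X) Set.univ b)
    (hb' : IsMinOn (obj g y' X) Set.univ b') :
    (X *ᵥ b - X *ᵥ b') ⬝ᵥ (X *ᵥ b - X *ᵥ b') ≤ (X *ᵥ b - X *ᵥ b') ⬝ᵥ (y - y') := by
  have h := residual_dotProduct_le_of_isMinOn hg hb b'
  have h' := residual_dotProduct_le_of_isMinOn hg hb' b
  generalize X *ᵥ b = u at h h' ⊢
  generalize X *ᵥ b' = u' at h h' ⊢
  simp only [sub_dotProduct, dotProduct_sub, dotProduct_comm y u, dotProduct_comm y' u',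
    dotProduct_comm u u', dotProduct_comm y u', dotProduct_comm y' u] at h h' ⊢
  linarith

variable {bhat : (Fin n → ℝ) → Fin p → ℝ}

lemma isFirmlyNonexpansive_mulVec_of_isMinOn (hg : ConvexOn ℝ Set.univ g)
    (hbhat : ∀ y, IsMinOn (obj g y X) Set.univ (bhat y)) :
    IsFirmlyNonexpansive fun y => X *ᵥ bhat y :=
  fun y y' => mulVec_sub_dotProduct_le_of_isMinOn hg (hbhat y) (hbhat y')

lemma abs_obj_add_sub_obj_sub_le (hg : ConvexOn ℝ Set.univ g)
    (hbhat : ∀ y, IsMinOn (obj g y X) Set.univ (bhat y)) (hn : n ≠ 0) (y h : Fin n → ℝ) :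
    |obj g (y + h) X (bhat (y + h)) - obj g y X (bhat y) - (y - X *ᵥ bhat y) ⬝ᵥ h / n|
      ≤ h ⬝ᵥ h / (2 * n) := by
  have hn' : (0 : ℝ) < n := by positivity
  have hup : obj g (y + h) X (bhat (y + h)) ≤ obj g (y + h) X (bhat y) :=
    hbhat _ (Set.mem_univ _)
  have hlow : obj g y X (bhat y) ≤ obj g y X (bhat (y + h)) := hbhat _ (Set.mem_univ _)
  have hδ : (X *ᵥ bhat (y + h) - X *ᵥ bhat y) ⬝ᵥ h ≤ h ⬝ᵥ h := by
    have := (isFirmlyNonexpansive_mulVec_of_isMinOn hg hbhat).id_sub.dotProduct_nonneg (y + h) y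
    rwa [add_sub_cancel_left, sub_sub_sub_comm, add_sub_cancel_left, sub_dotProduct,
      sub_nonneg] at this
  rw [obj_add_left y h (bhat y)] at hup
  rw [obj_add_left y h (bhat (y + h))] at hup ⊢
  have hres : y - X *ᵥ bhat (y + h) = (y - X *ᵥ bhat y) - (X *ᵥ bhat (y + h) - X *ᵥ bhat y) := by
    abel
  rw [hres] at hup ⊢
  generalize y - X *ᵥ bhat y = r at hup hδ ⊢
  generalize X *ᵥ bhat (y + h) - X *ᵥ bhat y = δ at hup hδ ⊢
  rw [sub_dotProduct] at hup ⊢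
  rw [abs_le]
  constructor
  · have : 0 ≤ (h ⬝ᵥ h - δ ⬝ᵥ h) / n := div_nonneg (sub_nonneg.mpr hδ) hn'.le
    have e : (2 * (r ⬝ᵥ h - δ ⬝ᵥ h) + h ⬝ᵥ h) / (2 * n) - r ⬝ᵥ h / n + h ⬝ᵥ h / (2 * n)
        = (h ⬝ᵥ h - δ ⬝ᵥ h) / n := by field_simp; ring
    linarith
  · have e : (2 * r ⬝ᵥ h + h ⬝ᵥ h) / (2 * n) - r ⬝ᵥ h / n = h ⬝ᵥ h / (2 * n) := by
      field_simp; ring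
    linarith

lemma hasFDerivAt_obj_of_isMinOn (hg : ConvexOn ℝ Set.univ g)
    (hbhat : ∀ y, IsMinOn (obj g y X) Set.univ (bhat y)) (hn : n ≠ 0) (y : Fin n → ℝ) :
    HasFDerivAt (fun z => obj g z X (bhat z))
      ((n : ℝ)⁻¹ • dotProductCLM (y - X *ᵥ bhat y)) y := by
  rw [hasFDerivAt_iff_isLittleO_nhds_zero]
  refine (Asymptotics.IsBigO.of_bound 1 (Filter.Eventually.of_forall fun h => ?_)).trans_isLittleO
    (Asymptotics.isLittleO_norm_pow_id one_lt_two)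
  have hh := dotProduct_self_le_card_mul_norm_sq h
  rw [Fintype.card_fin] at hh
  calc _ = |obj g (y + h) X (bhat (y + h)) - obj g y X (bhat y)
        - (y - X *ᵥ bhat y) ⬝ᵥ h / n| := by simp [div_eq_inv_mul]
    _ ≤ h ⬝ᵥ h / (2 * n) := abs_obj_add_sub_obj_sub_le hg hbhat hn y h
    _ ≤ 1 * ‖‖h‖ ^ 2‖ := by
      rw [div_le_iff₀ (by positivity), norm_pow, norm_norm]
      nlinarith [sq_nonneg ‖h‖]

lemma dotProduct_comm_of_hasFDerivAt (hg : ConvexOn ℝ Set.univ g)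
    (hbhat : ∀ y, IsMinOn (obj g y X) Set.univ (bhat y)) {y : Fin n → ℝ}
    {D : (Fin n → ℝ) →L[ℝ] Fin n → ℝ} (hD : HasFDerivAt (fun z => X *ᵥ bhat z) D y)
    (v w : Fin n → ℝ) : D v ⬝ᵥ w = D w ⬝ᵥ v := by
  rcases eq_or_ne n 0 with rfl | hn
  · simp [dotProduct]
  -- `y ↦ y - Xβ̂(y)` is `n` times the gradient of the optimal value, so its derivative is a Hessian
  have hgrad : HasFDerivAt (fun z => (n : ℝ)⁻¹ • dotProductCLM (z - X *ᵥ bhat z))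
      ((n : ℝ)⁻¹ • dotProductCLM.comp (ContinuousLinearMap.id ℝ _ - D)) y :=
    ((dotProductCLM.hasFDerivAt.comp y ((hasFDerivAt_id y).sub hD)).const_smul (n : ℝ)⁻¹ :)
  have h := second_derivative_symmetric_of_eventually
    (Filter.Eventually.of_forall (hasFDerivAt_obj_of_isMinOn hg hbhat hn)) hgrad v w
  simp only [_root_.smul_apply, ContinuousLinearMap.comp_apply,
    _root_.sub_apply, ContinuousLinearMap.id_apply, dotProductCLM_apply,
    smul_eq_mul, sub_dotProduct, dotProduct_comm v w] at h
  have := mul_left_cancel₀ (inv_ne_zero (Nat.cast_ne_zero.mpr hn)) h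
  linarith

end PenalizedLeastSquares

/-- **Lipschitz continuity in `y` and structure of the gradient `Ĥ`.** -/
theorem lipschitz_and_gradient_structure
    (n p : ℕ) (X : Matrix (Fin n) (Fin p) ℝ) (g : (Fin p → ℝ) → ℝ)
    (hg : ConvexOn ℝ Set.univ g)
    (bhat : (Fin n → ℝ) → Fin p → ℝ)
    (hbhat : ∀ y, IsMinOn (obj g y X) Set.univ (bhat y)) :
    -- (i)  `‖X(β̂(y) − β̂(ỹ))‖ ≤ ‖y − ỹ‖` for all `y, ỹ` and all choices of minimizers ...
    (∀ (y y' : Fin n → ℝ) (b b' : Fin p → ℝ),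
      IsMinOn (obj g y X) Set.univ b → IsMinOn (obj g y' X) Set.univ b' →
      Real.sqrt (∑ i, (X.mulVec b i - X.mulVec b' i) ^ 2) ≤
        Real.sqrt (∑ i, (y i - y' i) ^ 2)) ∧
    (∀ y y' : Fin n → ℝ,
      Real.sqrt (∑ i, (X.mulVec (bhat y) i - X.mulVec (bhat y') i) ^ 2) ≤
        Real.sqrt (∑ i, (y i - y' i) ^ 2)) ∧
    -- (ii) for Lebesgue-a.e. `y`, the map is differentiable at `y` with a symmetric
    -- positive semidefinite gradient `Ĥ` whose eigenvalues lie in `[0, 1]`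
    ∀ᵐ y ∂(volume : Measure (Fin n → ℝ)), ∃ H : Matrix (Fin n) (Fin n) ℝ,
      HasFDerivAt (fun u => X.mulVec (bhat u)) (mulVecCLM Hᵀ) y ∧
      H.PosSemidef ∧ (1 - H).PosSemidef ∧
      ((n : ℝ) - H.trace) * (1 - H.trace / n) ≤ frobSq (1 - H) ∧
      frobSq (1 - H) ≤ (n : ℝ) - H.trace := by
  have hsum (v w : Fin n → ℝ) : ∑ i, (v i - w i) ^ 2 = (v - w) ⬝ᵥ (v - w) := by
    simp [dotProduct, sq]
  have hlip {y y' : Fin n → ℝ} {b b' : Fin p → ℝ} (hb : IsMinOn (obj g y X) Set.univ b)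
      (hb' : IsMinOn (obj g y' X) Set.univ b') :
      √(∑ i, ((X *ᵥ b) i - (X *ᵥ b') i) ^ 2) ≤ √(∑ i, (y i - y' i) ^ 2) := by
    rw [hsum, hsum]
    exact Real.sqrt_le_sqrt (dotProduct_self_le_of_dotProduct_self_le_dotProduct
      (mulVec_sub_dotProduct_le_of_isMinOn hg hb hb'))
  have hF := isFirmlyNonexpansive_mulVec_of_isMinOn hg hbhat
  refine ⟨fun y y' b b' => hlip, fun y y' => hlip (hbhat y) (hbhat y'), ?_⟩
  filter_upwards [hF.ae_differentiableAt] with y hy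
  obtain ⟨D, hD⟩ : ∃ D, HasFDerivAt (fun u => X *ᵥ bhat u) D y := ⟨_, hy.hasFDerivAt⟩
  set H := LinearMap.toMatrix' (D : (Fin n → ℝ) →ₗ[ℝ] Fin n → ℝ)
  have hHD (v : Fin n → ℝ) : H *ᵥ v = D v := by
    rw [← toLin'_apply, toLin'_toMatrix']; rfl
  have hHfirm : IsFirmlyNonexpansive (H *ᵥ ·) := fun v w => by
    simpa only [hHD] using hD.isFirmlyNonexpansive hF v w
  have hIfirm : IsFirmlyNonexpansive ((1 - H) *ᵥ ·) := by
    simpa only [sub_mulVec, one_mulVec] using hHfirm.id_sub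
  have hsymm : H.IsSymm := isSymm_of_mulVec_dotProduct_comm fun v w => by
    simpa only [hHD] using dotProduct_comm_of_hasFDerivAt hg hbhat hD v w
  have htr : (1 - H).trace = n - H.trace := by simp [trace_sub]
  refine ⟨H, ?_, posSemidef_of_isFirmlyNonexpansive hsymm hHfirm,
    posSemidef_of_isFirmlyNonexpansive (isSymm_one.sub hsymm) hIfirm,
    H.sub_trace_mul_le_frobSq_one_sub, htr ▸ frobSq_le_trace hIfirm⟩
  rwa [hsymm.eq, show mulVecCLM H = D from ContinuousLinearMap.ext hHD]
end
end

section
/- Deterministic loss equivalence to the oracle: Let y = Xβ + ε with arbitrary fixed X ∈ ℝ^{n×p}, ε ∈ ℝⁿ, β ∈ ℝ^p, let g : ℝ^p → ℝ be convex, β̂ a minimizer of b ↦ ‖y − Xb‖²/(2n) + g(b), h = β̂ − β, and let Σ be positive definite, σ > 0, β* = argmin_b {‖Σ^{1/2}(β − b)‖²/2 + g(b)}, h* = β* − β, R* = σ² + ‖Σ^{1/2}h*‖². Suppose g satisfies uᵀ(s − s*) ≥ μ‖Σ^{1/2}u‖² for all u ∈ ℝ^p and all subgradients s ∈ ∂g(u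 + β*), s* ∈ ∂g(β*), with μ ∈ [0, 1/2]. Let F₊ = max{ ‖Xh*‖²/(n‖Σ^{1/2}h*‖²), ‖ε‖²/(σ²n), ‖ε − Xh*‖²/(nR*), 1 } and let F be a real number with F ≥ 2 such that either ‖Σ^{1/2}h‖² ≤ (F/2)·‖Xh‖²/n or μ > 0 and F = 2/μ. Then, with σ̄² = (F₊ − 1)R* + σ²: (i) ‖Σ^{1/2}h‖² ≤ F² max(σ̄², ‖Σ^{1/2}h*‖²) ≤ F₊F²R*; (ii) ‖Xh‖²/n ≤ max{ 2Fσ̄², σ̄² + F²‖Σ^{1/2}h*‖² } ≤ F₊F²R*. -/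
/-!
Both minimizers come with explicit subgradients, `Xᵀ(y - Xβ̂)/n ∈ ∂g(β̂)` and
`(Σ^{1/2})ᵀΣ^{1/2}(β - β*) ∈ ∂g(β*)`, so strong monotonicity at `u = β̂ - β* = h - h*` gives the
basic inequality `μ‖Σ^{1/2}u‖² ≤ ⟨Xu, ε - Xh⟩/n + ⟨Σ^{1/2}u, Σ^{1/2}h*⟩`. The empirical term is
at most `‖ε - Xh*‖²/(4n)` and at most `(‖ε‖² + ‖Xh*‖² - ‖Xh‖²)/(2n)`, and both `‖ε - Xh*‖²/n`
and `(‖ε‖² + ‖Xh*‖²)/n` are at most `F₊R* = σ̄² + ‖Σ^{1/2}h*‖²`. Polarising the population term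
leaves two quadratic inequalities in `‖Σ^{1/2}h‖`, `‖Σ^{1/2}h*‖` and `‖Xh‖²/n`. Under the first
alternative on `F` the comparison `‖Σ^{1/2}h‖² ≤ (F/2)‖Xh‖²/n` closes them; under the second,
`μF = 2` turns the first one into
`(F + 4)(‖Σ^{1/2}h‖ - ‖Σ^{1/2}h*‖)² ≤ F‖Σ^{1/2}h‖² + F(σ̄² - ‖Σ^{1/2}h*‖²)/2`, which forces
`‖Σ^{1/2}h‖ ≤ F max(σ̄, ‖Σ^{1/2}h*‖)`.
-/
open Matrix
open scoped Topology

noncomputable section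

/-- `s` is a subgradient of `g` at `b`. -/
def SubgradAt {p : ℕ} (g : (Fin p → ℝ) → ℝ) (s b : Fin p → ℝ) : Prop :=
  ∀ b', g b + ∑ j, s j * (b' j - b j) ≤ g b'

open Filter Set WithLp
open scoped RealInnerProductSpace

theorem SubgradAt.of_isMinOn_add {p : ℕ} {f g : (Fin p → ℝ) → ℝ} {s b : Fin p → ℝ}
    (hg : ConvexOn ℝ univ g) (hmin : IsMinOn (fun x => f x + g x) univ b)
    (hf : ∀ d, ∃ C, ∀ t, 0 < t → f (b + t • d) ≤ f b - t * (s ⬝ᵥ d) + t ^ 2 * C) :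
    SubgradAt g s b := by
  intro b'
  change g b + s ⬝ᵥ (b' - b) ≤ g b'
  obtain ⟨C, hC⟩ := hf (b' - b)
  have hsmall : ∀ t ∈ Ioo (0 : ℝ) 1, g b + s ⬝ᵥ (b' - b) ≤ g b' + t * C := by
    rintro t ⟨ht0, ht1⟩
    have hconv := hg.2 (mem_univ b) (mem_univ b') (sub_nonneg.2 ht1.le) ht0.le (by ring)
    rw [show (1 - t) • b + t • b' = b + t • (b' - b) by module, smul_eq_mul, smul_eq_mul] at hconv
    have hle := isMinOn_iff.1 hmin (b + t • (b' - b)) (mem_univ _)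
    have hmul : t * (g b + s ⬝ᵥ (b' - b)) ≤ t * (g b' + t * C) := by
      linarith [hC t ht0]
    exact le_of_mul_le_mul_left hmul ht0
  have hlim : Tendsto (fun t => g b' + t * C) (𝓝[>] 0) (𝓝 (g b')) := by
    have hcont : Continuous (fun t : ℝ => g b' + t * C) := by fun_prop
    simpa using (hcont.tendsto 0).mono_left nhdsWithin_le_nhds
  exact ge_of_tendsto hlim (eventually_of_mem (Ioo_mem_nhdsGT one_pos) hsmall)

theorem SubgradAt.of_isMinOn_leastSquares {m : Type*} [Fintype m] {p : ℕ}
    {g : (Fin p → ℝ) → ℝ} (hg : ConvexOn ℝ univ g) (A : Matrix m (Fin p) ℝ) (c : m → ℝ)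
    (κ : ℝ) {b : Fin p → ℝ}
    (hmin : IsMinOn (fun x => (∑ i, (c i - (A *ᵥ x) i) ^ 2) / (2 * κ) + g x) univ b) :
    SubgradAt g (κ⁻¹ • ((c - A *ᵥ b) ᵥ* A)) b := by
  refine .of_isMinOn_add hg hmin fun d => ⟨(∑ i, (A *ᵥ d) i ^ 2) / (2 * κ), fun t _ => ?_⟩
  rw [smul_dotProduct, ← dotProduct_mulVec]
  apply le_of_eq
  simp only [dotProduct, mulVec_add, mulVec_smul, Pi.add_apply, Pi.smul_apply, Pi.sub_apply,
    smul_eq_mul, div_eq_mul_inv, Finset.sum_mul, Finset.mul_sum, ← Finset.sum_sub_distrib,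
    ← Finset.sum_add_distrib]
  exact Finset.sum_congr rfl fun i _ => by ring

theorem dotProduct_inv_smul_vecMul {m k : Type*} [Fintype m] [Fintype k] (u : k → ℝ)
    (r : m → ℝ) (A : Matrix m k ℝ) (κ : ℝ) :
    u ⬝ᵥ (κ⁻¹ • (r ᵥ* A)) = (A *ᵥ u) ⬝ᵥ r / κ := by
  rw [dotProduct_smul, dotProduct_comm, ← dotProduct_mulVec, dotProduct_comm, smul_eq_mul,
    inv_mul_eq_div]

theorem basic_inequality_of_isMinOn {n p : ℕ} {g : (Fin p → ℝ) → ℝ} (hg : ConvexOn ℝ univ g)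
    (X : Matrix (Fin n) (Fin p) ℝ) (Ssq : Matrix (Fin p) (Fin p) ℝ) (y : Fin n → ℝ)
    {β bhat bstar : Fin p → ℝ} {μ : ℝ}
    (hbhat : IsMinOn
      (fun b => (∑ i, (y i - X.mulVec b i) ^ 2) / (2 * (n : ℝ)) + g b) univ bhat)
    (hbstar : IsMinOn (fun b => (∑ i, Ssq.mulVec (β - b) i ^ 2) / 2 + g b) univ bstar)
    (hμstrong : ∀ u s sstar : Fin p → ℝ,
      SubgradAt g s (u + bstar) → SubgradAt g sstar bstar →
      μ * ∑ i, Ssq.mulVec u i ^ 2 ≤ ∑ j, u j * (s j - sstar j)) :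
    μ * ∑ i, (Ssq *ᵥ (bhat - bstar)) i ^ 2 ≤
      (X *ᵥ (bhat - bstar)) ⬝ᵥ (y - X *ᵥ bhat) / n +
        (Ssq *ᵥ (bhat - bstar)) ⬝ᵥ (Ssq *ᵥ (bstar - β)) := by
  have hsub_hat := SubgradAt.of_isMinOn_leastSquares hg X y n hbhat
  have hsub_star := SubgradAt.of_isMinOn_leastSquares hg Ssq (Ssq *ᵥ β) 1
    (by simpa [mulVec_sub] using hbstar)
  refine (hμstrong (bhat - bstar) _ _ (by rwa [sub_add_cancel]) hsub_star).trans_eq ?_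
  change (bhat - bstar) ⬝ᵥ (_ - _) = _
  rw [dotProduct_sub, dotProduct_inv_smul_vecMul, dotProduct_inv_smul_vecMul, ← mulVec_sub,
    ← neg_sub bstar β, mulVec_neg, dotProduct_neg, div_one, sub_neg_eq_add]

theorem Matrix.PosDef.eq_zero_of_sum_sq_mulVec_eq_zero {k : Type*} [Fintype k] [DecidableEq k]
    {S : Matrix k k ℝ} (hS : S.PosDef) {v : k → ℝ} (h0 : ∑ i, (S *ᵥ v) i ^ 2 = 0) : v = 0 := by
  refine mulVec_injective_of_isUnit hS.isUnit (funext fun i => ?_)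
  simpa using (Finset.sum_eq_zero_iff_of_nonneg fun i _ => sq_nonneg _).1 h0 i (Finset.mem_univ _)

theorem EuclideanSpace.norm_toLp_sq {ι : Type*} [Fintype ι] (v : ι → ℝ) :
    ‖(toLp 2 v : EuclideanSpace ℝ ι)‖ ^ 2 = ∑ i, v i ^ 2 :=
  EuclideanSpace.real_norm_sq_eq _

theorem EuclideanSpace.real_inner_toLp {ι : Type*} [Fintype ι] (v w : ι → ℝ) :
    ⟪(toLp 2 v : EuclideanSpace ℝ ι), toLp 2 w⟫ = v ⬝ᵥ w := by
  rw [EuclideanSpace.inner_toLp_toLp, star_trivial, dotProduct_comm]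

theorem div_le_mul_of_div_mul_le {A N B c : ℝ} (hB : 0 < B) (h : A / (N * B) ≤ c) :
    A / N ≤ c * B :=
  (div_le_iff₀ hB).1 (by rwa [div_div])

theorem max_le_sq_mul_add {F S H : ℝ} (hF : 2 ≤ F) (hS : 0 ≤ S) (hH : 0 ≤ H) :
    max (2 * F * S) (S + F ^ 2 * H) ≤ F ^ 2 * (S + H) := by
  have hF0 : 0 ≤ F := by linarith
  exact max_le (by nlinarith [mul_nonneg (mul_nonneg hF0 (sub_nonneg.2 hF)) hS])
    (by nlinarith [le_mul_of_one_le_left hS (by nlinarith : (1 : ℝ) ≤ F ^ 2)])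

theorem sq_le_sq_mul_max_of_quadratic_le {F p H S : ℝ} (hF : 4 ≤ F) (hp : 0 ≤ p) (hH : 0 ≤ H)
    (hS : 0 ≤ S) (h : (F + 4) * (p - H) ^ 2 ≤ F * p ^ 2 + F * (S - H ^ 2) / 2) :
    p ^ 2 ≤ F ^ 2 * max S (H ^ 2) := by
  set s := √(max S (H ^ 2))
  have hs : 0 ≤ s := Real.sqrt_nonneg _
  have hs2 : s ^ 2 = max S (H ^ 2) := Real.sq_sqrt (hS.trans (le_max_left _ _))
  have hSs : S ≤ s ^ 2 := hs2 ▸ le_max_left _ _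
  have hHs : H ≤ s := (Real.le_sqrt hH (hS.trans (le_max_left _ _))).2 (le_max_right _ _)
  suffices hpF : p ≤ F * s by
    rw [← hs2, ← mul_pow]
    exact pow_le_pow_left₀ hp hpF 2
  -- `(F + 4)(p - H)² - F p²` increases for `p ≥ (F + 4)H/4`, and at `p = F s` it already
  -- exceeds `F (S - H²)/2`.
  by_contra! hlt
  have h1 : 0 ≤ (s - H) * (2 * (F + 4) * p - (3 * F / 2 + 4) * (H + s)) := by
    apply mul_nonneg (by linarith)
    nlinarith [mul_le_mul_of_nonneg_left hHs (by linarith : (0 : ℝ) ≤ 3 * F / 2 + 4)]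
  have h2 : 0 < (p - F * s) * (4 * p - (F + 4) * s) := by
    apply mul_pos (by linarith)
    nlinarith
  have h3 : 0 ≤ (p - F * s) * s * (3 * F - 4) :=
    mul_nonneg (mul_nonneg (by linarith) hs) (by linarith)
  have h4 : 0 ≤ s ^ 2 * (2 * F ^ 2 - 7 * F + 4) := mul_nonneg (sq_nonneg s) (by nlinarith)
  nlinarith

theorem oracle_bounds_of_sq_le_mul {p H x2 S F : ℝ} (hF : 2 ≤ F)
    (hfit : x2 + (p - H) ^ 2 ≤ S + p ^ 2) (hcase : p ^ 2 ≤ F / 2 * x2) :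
    p ^ 2 ≤ F ^ 2 * max S (H ^ 2) ∧ x2 ≤ max (2 * F * S) (S + F ^ 2 * H ^ 2) := by
  have hF0 : 0 < F := by linarith
  -- `2 p H ≤ p² / F + F H²` absorbs the cross term
  have hx2 : x2 ≤ 2 * S + 2 * (F - 1) * H ^ 2 := by
    refine le_of_mul_le_mul_left ?_ hF0
    nlinarith [mul_le_mul_of_nonneg_left hfit hF0.le, sq_nonneg (p - F * H)]
  have hSM := le_max_left S (H ^ 2)
  have hHM := le_max_right S (H ^ 2)
  constructor
  · have hF1 : 0 ≤ F * (F - 1) := by nlinarith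
    nlinarith [mul_le_mul_of_nonneg_left hSM hF0.le, mul_le_mul_of_nonneg_left hHM hF1]
  · rcases le_total S (H ^ 2) with hSH | hHS
    · exact le_max_of_le_right (by nlinarith)
    · exact le_max_of_le_left (by nlinarith)

theorem oracle_bounds_of_mul_eq_two {p H x2 S F μ : ℝ} (hμ0 : 0 < μ) (hμ : μ ≤ 1 / 2)
    (hμF : μ * F = 2) (hp : 0 ≤ p) (hH : 0 ≤ H) (hS : 0 ≤ S)
    (hA : (1 + 2 * μ) * (p - H) ^ 2 ≤ p ^ 2 + (S - H ^ 2) / 2)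
    (hB : x2 + (1 + 2 * μ) * (p - H) ^ 2 ≤ S + p ^ 2) :
    p ^ 2 ≤ F ^ 2 * max S (H ^ 2) ∧ x2 ≤ max (2 * F * S) (S + F ^ 2 * H ^ 2) := by
  have hF : 4 ≤ F := by nlinarith
  have hscale : F * (1 + 2 * μ) = F + 4 := by linear_combination 2 * hμF
  constructor
  · refine sq_le_sq_mul_max_of_quadratic_le hF hp hH hS ?_
    rw [← hscale, mul_assoc]
    nlinarith [mul_le_mul_of_nonneg_left hA (by linarith : (0 : ℝ) ≤ F)]
  · refine le_max_of_le_right ?_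
    have : F * (p ^ 2 - (1 + 2 * μ) * (p - H) ^ 2) ≤ F * (H ^ 2 + F * H ^ 2 / 4) := by
      rw [mul_sub, ← mul_assoc, hscale]
      nlinarith [sq_nonneg (2 * p - (F + 4) * H / 2)]
    nlinarith [le_of_mul_le_mul_left this (by linarith : (0 : ℝ) < F)]

section InnerProduct

variable {E V : Type*} [NormedAddCommGroup E] [InnerProductSpace ℝ E]
  [NormedAddCommGroup V] [InnerProductSpace ℝ V]

theorem real_inner_sub_le_norm_sq_div_four (d r : E) : ⟪d, r - d⟫ ≤ ‖r‖ ^ 2 / 4 := by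
  have h := norm_sub_sq_real ((1 / 2 : ℝ) • r) d
  rw [norm_smul, real_inner_smul_left, Real.norm_of_nonneg (by norm_num)] at h
  rw [inner_sub_right, real_inner_self_eq_norm_sq, real_inner_comm]
  nlinarith [norm_nonneg ((1 / 2 : ℝ) • r - d), norm_nonneg r]

theorem real_inner_sub_sub_le (a a' e : E) :
    ⟪a - a', e - a⟫ ≤ (‖e‖ ^ 2 + ‖a'‖ ^ 2 - ‖a‖ ^ 2) / 2 := by
  have h := norm_add_sq_real (e - a) a'
  rw [norm_sub_sq_real] at h
  simp only [inner_sub_left, inner_sub_right, real_inner_self_eq_norm_sq, real_inner_comm] at h ⊢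
  nlinarith [sq_nonneg ‖e - a + a'‖]

theorem oracle_bounds_of_basic_inequality {a a' e : E} {w w' : V} {N μ F S : ℝ}
    (hN : 0 ≤ N) (hS : 0 ≤ S) (hμ0 : 0 ≤ μ) (hμ : μ ≤ 1 / 2) (hF : 2 ≤ F)
    (hkey : μ * ‖w - w'‖ ^ 2 ≤ ⟪a - a', e - a⟫ / N + ⟪w - w', w'⟫)
    (hnoise : (‖e‖ ^ 2 + ‖a'‖ ^ 2) / N ≤ S + ‖w'‖ ^ 2)
    (hres : ‖e - a'‖ ^ 2 / N ≤ S + ‖w'‖ ^ 2)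
    (hcase : ‖w‖ ^ 2 ≤ F / 2 * (‖a‖ ^ 2 / N) ∨ (0 < μ ∧ F = 2 / μ)) :
    ‖w‖ ^ 2 ≤ F ^ 2 * max S (‖w'‖ ^ 2) ∧
      ‖a‖ ^ 2 / N ≤ max (2 * F * S) (S + F ^ 2 * ‖w'‖ ^ 2) := by
  have hpol : ⟪w - w', w'⟫ = (‖w‖ ^ 2 - ‖w - w'‖ ^ 2 - ‖w'‖ ^ 2) / 2 := by
    have h := norm_add_sq_real (w - w') w'
    rw [sub_add_cancel] at h
    linarith
  have hrev : (‖w‖ - ‖w'‖) ^ 2 ≤ ‖w - w'‖ ^ 2 := by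
    rw [← sq_abs]
    exact pow_le_pow_left₀ (abs_nonneg _) (abs_norm_sub_norm_le w w') 2
  have hfit₁ : ⟪a - a', e - a⟫ / N ≤ (S + ‖w'‖ ^ 2) / 4 := by
    have h := real_inner_sub_le_norm_sq_div_four (a - a') (e - a')
    rw [sub_sub_sub_cancel_right] at h
    calc ⟪a - a', e - a⟫ / N ≤ ‖e - a'‖ ^ 2 / 4 / N := div_le_div_of_nonneg_right h hN
      _ = ‖e - a'‖ ^ 2 / N / 4 := div_right_comm _ _ _
      _ ≤ (S + ‖w'‖ ^ 2) / 4 := by gcongr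
  have hfit₂ : ⟪a - a', e - a⟫ / N ≤ ((‖e‖ ^ 2 + ‖a'‖ ^ 2) / N - ‖a‖ ^ 2 / N) / 2 := by
    calc ⟪a - a', e - a⟫ / N ≤ (‖e‖ ^ 2 + ‖a'‖ ^ 2 - ‖a‖ ^ 2) / 2 / N :=
          div_le_div_of_nonneg_right (real_inner_sub_sub_le a a' e) hN
      _ = _ := by ring
  have hμ₁ : 0 ≤ 1 + 2 * μ := by linarith
  have hA : (1 + 2 * μ) * (‖w‖ - ‖w'‖) ^ 2 ≤ ‖w‖ ^ 2 + (S - ‖w'‖ ^ 2) / 2 :=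
    (mul_le_mul_of_nonneg_left hrev hμ₁).trans (by linarith)
  have hB : ‖a‖ ^ 2 / N + (1 + 2 * μ) * (‖w‖ - ‖w'‖) ^ 2 ≤ S + ‖w‖ ^ 2 :=
    (add_le_add_right (mul_le_mul_of_nonneg_left hrev hμ₁) _).trans (by linarith)
  rcases hcase with hcase | ⟨hμpos, rfl⟩
  · exact oracle_bounds_of_sq_le_mul hF
      (by nlinarith [mul_nonneg hμ0 (sq_nonneg (‖w‖ - ‖w'‖))]) hcase
  · exact oracle_bounds_of_mul_eq_two hμpos hμ (mul_div_cancel₀ _ hμpos.ne') (norm_nonneg _)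
      (norm_nonneg _) hS hA hB

end InnerProduct

theorem deterministic_loss_equivalence_general
    (n p : ℕ) (X : Matrix (Fin n) (Fin p) ℝ) (ε : Fin n → ℝ) (β : Fin p → ℝ)
    (g : (Fin p → ℝ) → ℝ) (hg : ConvexOn ℝ Set.univ g)
    (Ssq : Matrix (Fin p) (Fin p) ℝ)
    (hSsqPD : Ssq.PosDef)
    (σ μ : ℝ) (hσ : 0 < σ) (hμ0 : 0 ≤ μ) (hμhalf : μ ≤ 1 / 2)
    (y : Fin n → ℝ) (hy : y = X.mulVec β + ε)
    (bhat : Fin p → ℝ)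
    (hbhat : IsMinOn
      (fun b => (∑ i, (y i - X.mulVec b i) ^ 2) / (2 * (n : ℝ)) + g b) Set.univ bhat)
    (bstar : Fin p → ℝ)
    (hbstar : IsMinOn
      (fun b => (∑ i, Ssq.mulVec (β - b) i ^ 2) / 2 + g b) Set.univ bstar)
    (h hstar : Fin p → ℝ) (hh : h = bhat - β) (hhs : hstar = bstar - β)
    (Rst : ℝ) (hRst : Rst = σ ^ 2 + ∑ i, Ssq.mulVec hstar i ^ 2)
    -- `uᵀ(s − s*) ≥ μ‖Σ^{1/2}u‖²` for all `u` and subgradients `s ∈ ∂g(u + β*)`, `s* ∈ ∂g(β*)`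
    (hμstrong : ∀ u s sstar : Fin p → ℝ,
      SubgradAt g s (u + bstar) → SubgradAt g sstar bstar →
      μ * ∑ i, Ssq.mulVec u i ^ 2 ≤ ∑ j, u j * (s j - sstar j))
    (Fp : ℝ)
    (hFp : Fp = max ((∑ i, X.mulVec hstar i ^ 2) / ((n : ℝ) * ∑ i, Ssq.mulVec hstar i ^ 2))
      (max ((∑ i, ε i ^ 2) / (σ ^ 2 * (n : ℝ)))
        (max ((∑ i, (ε i - X.mulVec hstar i) ^ 2) / ((n : ℝ) * Rst)) 1)))
    (F : ℝ) (hF2 : 2 ≤ F)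
    (hFalt : (∑ i, Ssq.mulVec h i ^ 2) ≤ F / 2 * ((∑ i, X.mulVec h i ^ 2) / (n : ℝ)) ∨
      (0 < μ ∧ F = 2 / μ))
    (sbar2 : ℝ) (hsbar : sbar2 = (Fp - 1) * Rst + σ ^ 2) :
    -- (i)
    (((∑ i, Ssq.mulVec h i ^ 2) ≤ F ^ 2 * max sbar2 (∑ i, Ssq.mulVec hstar i ^ 2)) ∧
      F ^ 2 * max sbar2 (∑ i, Ssq.mulVec hstar i ^ 2) ≤ Fp * F ^ 2 * Rst) ∧
    -- (ii)
    (((∑ i, X.mulVec h i ^ 2) / (n : ℝ)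
        ≤ max (2 * F * sbar2) (sbar2 + F ^ 2 * ∑ i, Ssq.mulVec hstar i ^ 2)) ∧
      max (2 * F * sbar2) (sbar2 + F ^ 2 * ∑ i, Ssq.mulVec hstar i ^ 2)
        ≤ Fp * F ^ 2 * Rst) := by
  have hn : (0 : ℝ) ≤ n := n.cast_nonneg
  have hRst₀ : 0 < Rst := by rw [hRst]; positivity
  have hFp₁ : 1 ≤ Fp := hFp ▸ le_max_of_le_right (le_max_of_le_right (le_max_right _ _))
  have hS : 0 ≤ sbar2 := by rw [hsbar]; nlinarith
  have hFpRst : Fp * Rst = sbar2 + ∑ i, Ssq.mulVec hstar i ^ 2 := by rw [hsbar, hRst]; ring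
  have hH : 0 ≤ ∑ i, Ssq.mulVec hstar i ^ 2 := Finset.sum_nonneg fun i _ => sq_nonneg _
  have hE : (∑ i, ε i ^ 2) / n ≤ Fp * σ ^ 2 := div_le_mul_of_div_mul_le (by positivity)
    (by rw [mul_comm]; exact hFp ▸ le_max_of_le_right (le_max_left _ _))
  have hD : (∑ i, X.mulVec hstar i ^ 2) / n ≤ Fp * ∑ i, Ssq.mulVec hstar i ^ 2 := by
    rcases hH.eq_or_lt with h0 | hpos
    · simp [hSsqPD.eq_zero_of_sum_sq_mulVec_eq_zero h0.symm]
    · exact div_le_mul_of_div_mul_le hpos (hFp ▸ le_max_left _ _)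
  have hW : (∑ i, (ε i - X.mulVec hstar i) ^ 2) / n ≤ Fp * Rst := div_le_mul_of_div_mul_le hRst₀
    (hFp ▸ le_max_of_le_right (le_max_of_le_right (le_max_left _ _)))
  have hkey := basic_inequality_of_isMinOn hg X Ssq y hbhat hbstar hμstrong
  rw [show bhat - bstar = h - hstar by rw [hh, hhs, sub_sub_sub_cancel_right],
    show y - X *ᵥ bhat = ε - X *ᵥ h by rw [hy, hh, mulVec_sub]; abel, ← hhs] at hkey
  obtain ⟨hi, hii⟩ := oracle_bounds_of_basic_inequality (E := EuclideanSpace ℝ (Fin n))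
    (V := EuclideanSpace ℝ (Fin p)) (a := toLp 2 (X *ᵥ h)) (a' := toLp 2 (X *ᵥ hstar))
    (e := toLp 2 ε) (w := toLp 2 (Ssq *ᵥ h)) (w' := toLp 2 (Ssq *ᵥ hstar)) hn hS hμ0 hμhalf hF2
    (by simpa only [← WithLp.toLp_sub, ← mulVec_sub, EuclideanSpace.norm_toLp_sq,
      EuclideanSpace.real_inner_toLp] using hkey)
    (by simp only [EuclideanSpace.norm_toLp_sq]; rw [add_div, ← hFpRst, hRst, mul_add]; linarith)
    (by simpa only [← WithLp.toLp_sub, EuclideanSpace.norm_toLp_sq, Pi.sub_apply, hFpRst] using hW)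
    (by simpa only [EuclideanSpace.norm_toLp_sq] using hFalt)
  simp only [EuclideanSpace.norm_toLp_sq] at hi hii
  rw [mul_comm Fp, mul_assoc, hFpRst]
  exact ⟨⟨hi, mul_le_mul_of_nonneg_left (max_le_add_of_nonneg hS hH) (sq_nonneg F)⟩, hii,
    max_le_sq_mul_add hF2 hS hH⟩

/-- **Deterministic loss equivalence to the oracle.** -/
theorem deterministic_loss_equivalence
    (n p : ℕ) (X : Matrix (Fin n) (Fin p) ℝ) (ε : Fin n → ℝ) (β : Fin p → ℝ)
    (g : (Fin p → ℝ) → ℝ) (hg : ConvexOn ℝ Set.univ g)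
    (Sig Ssq : Matrix (Fin p) (Fin p) ℝ) (hSig : Sig.PosDef)
    (hSsqPD : Ssq.PosDef) (hSsqSym : Ssqᵀ = Ssq) (hSsqSq : Ssq * Ssq = Sig)
    (σ μ : ℝ) (hσ : 0 < σ) (hμ0 : 0 ≤ μ) (hμhalf : μ ≤ 1 / 2)
    (y : Fin n → ℝ) (hy : y = X.mulVec β + ε)
    (bhat : Fin p → ℝ)
    (hbhat : IsMinOn
      (fun b => (∑ i, (y i - X.mulVec b i) ^ 2) / (2 * (n : ℝ)) + g b) Set.univ bhat)
    (bstar : Fin p → ℝ)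
    (hbstar : IsMinOn
      (fun b => (∑ i, Ssq.mulVec (β - b) i ^ 2) / 2 + g b) Set.univ bstar)
    (h hstar : Fin p → ℝ) (hh : h = bhat - β) (hhs : hstar = bstar - β)
    (Rst : ℝ) (hRst : Rst = σ ^ 2 + ∑ i, Ssq.mulVec hstar i ^ 2)
    -- `uᵀ(s − s*) ≥ μ‖Σ^{1/2}u‖²` for all `u` and subgradients `s ∈ ∂g(u + β*)`, `s* ∈ ∂g(β*)`
    (hμstrong : ∀ u s sstar : Fin p → ℝ,
      SubgradAt g s (u + bstar) → SubgradAt g sstar bstar →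
      μ * ∑ i, Ssq.mulVec u i ^ 2 ≤ ∑ j, u j * (s j - sstar j))
    (Fp : ℝ)
    (hFp : Fp = max ((∑ i, X.mulVec hstar i ^ 2) / ((n : ℝ) * ∑ i, Ssq.mulVec hstar i ^ 2))
      (max ((∑ i, ε i ^ 2) / (σ ^ 2 * (n : ℝ)))
        (max ((∑ i, (ε i - X.mulVec hstar i) ^ 2) / ((n : ℝ) * Rst)) 1)))
    (F : ℝ) (hF2 : 2 ≤ F)
    (hFalt : (∑ i, Ssq.mulVec h i ^ 2) ≤ F / 2 * ((∑ i, X.mulVec h i ^ 2) / (n : ℝ)) ∨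
      (0 < μ ∧ F = 2 / μ))
    (sbar2 : ℝ) (hsbar : sbar2 = (Fp - 1) * Rst + σ ^ 2) :
    -- (i)
    (((∑ i, Ssq.mulVec h i ^ 2) ≤ F ^ 2 * max sbar2 (∑ i, Ssq.mulVec hstar i ^ 2)) ∧
      F ^ 2 * max sbar2 (∑ i, Ssq.mulVec hstar i ^ 2) ≤ Fp * F ^ 2 * Rst) ∧
    -- (ii)
    (((∑ i, X.mulVec h i ^ 2) / (n : ℝ)
        ≤ max (2 * F * sbar2) (sbar2 + F ^ 2 * ∑ i, Ssq.mulVec hstar i ^ 2)) ∧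
      max (2 * F * sbar2) (sbar2 + F ^ 2 * ∑ i, Ssq.mulVec hstar i ^ 2)
        ≤ Fp * F ^ 2 * Rst) :=
  deterministic_loss_equivalence_general n p X ε β g hg Ssq hSsqPD σ μ hσ hμ0 hμhalf y hy bhat hbhat
    bstar hbstar h hstar hh hhs Rst hRst hμstrong Fp hFp F hF2 hFalt sbar2 hsbar
end
end

section
/- Deterministic lower bound on the normalized residual: In the setting of the deterministic loss-equivalence lemma (y = Xβ + ε, g convex, β̂ a minimizer of b ↦ ‖y − Xb‖²/(2n) + g(b), h = β̂ − β, β* = argmin_b {‖Σ^{1/2}(β − b)‖²/2 + g(b)}, h* = β* − β, R* = σ² + ‖Σ^{1/2}h*‖², and F₊ = max{ ‖Xh*‖²/(n‖Σ^{1/2}h*‖²), ‖ε‖²/(σ²n), ‖ε − Xh*‖²/(nR*), 1 }), let d be any real with 0 ≤ d ≤ n (in the paper, d = d̂f = tr(Ĥ) ∈ [0, n]), let g* = Xh*/‖Σ^{1/2}h*‖ and a* = Σh*/‖Σ^{1/2}h*‖, and define the nonnegative quantities Δa = σ²|(1 − d/n) − εᵀ(y − Xβ̂)/(nσ²)|²/R*,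 Δb = max(F₊ − 1, 0)·‖y − Xβ̂‖²/(nR*), Δc = |(1 − d/n)⟨a*, h⟩ − g*ᵀ(Xβ̂ − y)/n|²/R*. Then (1 − d/n)²/8 ≤ ‖y − Xβ̂‖²/(nR*) + Δa + Δb + Δc. -/
/-!
Adding the first-order optimality conditions of `bhat` and `bstar` for the common convex penalty
`g` (monotonicity of `∂g`) gives, with `r = y - X bhat`,
`‖Σ^{1/2} h*‖² + ‖r‖² / n ≤ ⟪Σ h*, h⟫ + ⟪ε - X h*, r⟫ / n`.
Multiplied by `t = 1 - d / n ∈ [0, 1]` and regrouped, this reads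
`t R* ≤ σ² A + ‖Σ^{1/2} h*‖ C + (1 + t) ⟪ε - X h*, r⟫ / n`, where `A` and `C` are the quantities
inside `Δa` and `Δc`. Cauchy–Schwarz in `ℝ²` bounds the first two terms by `R* √(Δa + Δc)`;
Cauchy–Schwarz in `ℝⁿ` and the definition of `F₊` bound the last one by
`2 R* √(‖r‖² / (n R*) + Δb)`. Conclude with `(x + y)² ≤ 2 x² + 2 y²`.
-/

open Matrix Set Filter
open scoped Topology

noncomputable section

theorem ConvexOn.le_add_of_isMinOn_add {E : Type*} [AddCommGroup E] [Module ℝ E] {φ g : E → ℝ}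
    (hg : ConvexOn ℝ univ g) {x : E} (hx : IsMinOn (fun b => φ b + g b) univ x) (v : E)
    {L Q : ℝ} (hφ : ∀ τ : ℝ, φ (x + τ • v) = φ x + τ * L + τ ^ 2 * Q) :
    g x ≤ g (x + v) + L := by
  have hsmall : ∀ τ ∈ Ioc (0 : ℝ) 1, g x ≤ g (x + v) + L + τ * Q := by
    rintro τ ⟨hτ0, hτ1⟩
    have hmin : φ x + g x ≤ φ (x + τ • v) + g (x + τ • v) := hx (mem_univ _)
    have hconv : g (x + τ • v) ≤ (1 - τ) * g x + τ * g (x + v) := by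
      have := hg.2 (mem_univ x) (mem_univ (x + v)) (sub_nonneg.2 hτ1) hτ0.le (sub_add_cancel 1 τ)
      rwa [show (1 - τ) • x + τ • (x + v) = x + τ • v by module] at this
    rw [hφ] at hmin
    refine le_of_mul_le_mul_left ?_ hτ0
    linear_combination hmin + hconv
  have hlim : Tendsto (fun τ => g (x + v) + L + τ * Q) (𝓝[>] 0) (𝓝 (g (x + v) + L)) := by
    refine tendsto_nhdsWithin_of_tendsto_nhds ?_
    simpa using (Continuous.tendsto (by fun_prop : Continuous fun τ : ℝ => g (x + v) + L + τ * Q) 0)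
  exact ge_of_tendsto hlim (eventually_of_mem (Ioc_mem_nhdsGT one_pos) hsmall)

theorem ConvexOn.add_dotProduct_le_of_isMinOn_sum_sq_add {m k : Type*} [Fintype m] [Fintype k]
    {g : (k → ℝ) → ℝ} (hg : ConvexOn ℝ univ g) (M : Matrix m k ℝ) (c : m → ℝ) (κ : ℝ)
    {x : k → ℝ} (hx : IsMinOn (fun b => (∑ i, (c i - (M *ᵥ b) i) ^ 2) / κ + g b) univ x)
    (v : k → ℝ) :
    g x + 2 * ((c - M *ᵥ x) ⬝ᵥ M *ᵥ v) / κ ≤ g (x + v) := by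
  have hexp : ∀ τ : ℝ, ∑ i, (c i - (M *ᵥ (x + τ • v)) i) ^ 2 = ∑ i, (c i - (M *ᵥ x) i) ^ 2
      - τ * (2 * ((c - M *ᵥ x) ⬝ᵥ M *ᵥ v)) + τ ^ 2 * (M *ᵥ v ⬝ᵥ M *ᵥ v) := fun τ => by
    simp only [dotProduct, mulVec_add, mulVec_smul, Pi.add_apply, Pi.smul_apply, Pi.sub_apply,
      smul_eq_mul, Finset.mul_sum, ← Finset.sum_sub_distrib, ← Finset.sum_add_distrib]
    exact Finset.sum_congr rfl fun i _ => by ring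
  have := hg.le_add_of_isMinOn_add hx v (L := -(2 * ((c - M *ᵥ x) ⬝ᵥ M *ᵥ v) / κ))
    (Q := (M *ᵥ v ⬝ᵥ M *ᵥ v) / κ) fun τ => by rw [hexp]; ring
  linarith

theorem Matrix.dotProduct_self_eq_sum_sq {ι R : Type*} [Fintype ι] [CommSemiring R] (v : ι → R) :
    v ⬝ᵥ v = ∑ i, v i ^ 2 := by
  simp only [dotProduct, sq]

theorem Matrix.mulVec_dotProduct_mulVec {m k R : Type*} [Fintype m] [Fintype k] [CommSemiring R]
    (M : Matrix m k R) (a b : k → R) : M *ᵥ a ⬝ᵥ M *ᵥ b = (Mᵀ * M) *ᵥ a ⬝ᵥ b := by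
  rw [dotProduct_mulVec, ← mulVec_transpose, mulVec_mulVec]

theorem Matrix.PosDef.eq_zero_of_dotProduct_mulVec_eq_zero {ι : Type*} [Fintype ι]
    {M : Matrix ι ι ℝ} (hM : M.PosDef) {x : ι → ℝ} (hx : x ⬝ᵥ M *ᵥ x = 0) : x = 0 := by
  by_contra hne
  simpa [hx] using hM.dotProduct_mulVec_pos hne

theorem Matrix.dotProduct_div_sq_le {ι : Type*} [Fintype ι] (u r : ι → ℝ) (m : ℝ) :
    (u ⬝ᵥ r / m) ^ 2 ≤ (∑ i, u i ^ 2) / m * ((∑ i, r i ^ 2) / m) := by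
  rw [div_pow, div_mul_div_comm, ← sq]
  exact div_le_div_of_nonneg_right (Finset.sum_mul_sq_le_sq_mul_sq _ _ _) (sq_nonneg m)

theorem sq_mul_add_mul_div_le {a b c d : ℝ} (h : 0 < a ^ 2 + b ^ 2) :
    ((a ^ 2 * c + b * d) / (a ^ 2 + b ^ 2)) ^ 2 ≤ (a ^ 2 * c ^ 2 + d ^ 2) / (a ^ 2 + b ^ 2) := by
  have hcs : (a ^ 2 * c + b * d) ^ 2 ≤ (a ^ 2 + b ^ 2) * (a ^ 2 * c ^ 2 + d ^ 2) := by
    nlinarith [mul_nonneg (sq_nonneg a) (sq_nonneg (b * c - d))]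
  calc ((a ^ 2 * c + b * d) / (a ^ 2 + b ^ 2)) ^ 2
      = (a ^ 2 * c + b * d) ^ 2 / (a ^ 2 + b ^ 2) ^ 2 := div_pow _ _ _
    _ ≤ (a ^ 2 + b ^ 2) * (a ^ 2 * c ^ 2 + d ^ 2) / (a ^ 2 + b ^ 2) ^ 2 := by gcongr
    _ = (a ^ 2 * c ^ 2 + d ^ 2) / (a ^ 2 + b ^ 2) := by
      rw [sq (a ^ 2 + b ^ 2), mul_div_mul_left _ _ h.ne']

theorem sq_div_eight_le_of_mul_le_add {t R x w E F ρ : ℝ} (hR : 0 < R) (ht0 : 0 ≤ t)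
    (ht1 : t ≤ 1) (hρ : 0 ≤ ρ) (h : t * R ≤ x + (1 + t) * w) (hx : (x / R) ^ 2 ≤ E)
    (hw : (w / R) ^ 2 ≤ F * ρ) : t ^ 2 / 8 ≤ ρ + E + max (F - 1) 0 * ρ := by
  have hsplit : t ≤ x / R + (1 + t) * (w / R) := by
    rw [mul_div_assoc', ← add_div, le_div_iff₀ hR]
    exact h
  have hFρ : F * ρ ≤ ρ + max (F - 1) 0 * ρ := by nlinarith [le_max_left (F - 1) 0]
  have hw' : ((1 + t) * (w / R)) ^ 2 ≤ 4 * (F * ρ) := by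
    rw [mul_pow]
    exact mul_le_mul (by nlinarith) hw (sq_nonneg _) (by norm_num)
  nlinarith [pow_le_pow_left₀ ht0 hsplit 2, sq_nonneg (x / R),
    sq_nonneg (x / R - (1 + t) * (w / R))]

theorem dotProduct_mulVec_add_residual_le_of_isMinOn {n p : ℕ} {X : Matrix (Fin n) (Fin p) ℝ}
    {ε y : Fin n → ℝ} {β : Fin p → ℝ} (hy : y = X *ᵥ β + ε) {g : (Fin p → ℝ) → ℝ}
    (hg : ConvexOn ℝ univ g) {S Sig : Matrix (Fin p) (Fin p) ℝ} (hS : Sᵀ * S = Sig)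
    {bhat bstar : Fin p → ℝ}
    (hbhat : IsMinOn (fun b => (∑ i, (y i - X.mulVec b i) ^ 2) / (2 * (n : ℝ)) + g b) univ bhat)
    (hbstar : IsMinOn (fun b => (∑ i, S.mulVec (β - b) i ^ 2) / 2 + g b) univ bstar) :
    (bstar - β) ⬝ᵥ Sig *ᵥ (bstar - β) + (y - X *ᵥ bhat) ⬝ᵥ (y - X *ᵥ bhat) / n
      ≤ Sig *ᵥ (bstar - β) ⬝ᵥ (bhat - β) + (ε - X *ᵥ (bstar - β)) ⬝ᵥ (y - X *ᵥ bhat) / n := by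
  have h1 := hg.add_dotProduct_le_of_isMinOn_sum_sq_add X y (2 * n) hbhat (bstar - bhat)
  have h2 := hg.add_dotProduct_le_of_isMinOn_sum_sq_add S (S *ᵥ β) 2
    (by simpa only [mulVec_sub, Pi.sub_apply] using hbstar) (bhat - bstar)
  rw [add_sub_cancel] at h1 h2
  have hX : X *ᵥ (bstar - bhat) = (y - X *ᵥ bhat) - (ε - X *ᵥ (bstar - β)) := by
    subst hy; simp only [mulVec_sub]; abel
  have hS₁ : S *ᵥ β - S *ᵥ bstar = -(S *ᵥ (bstar - β)) := by rw [mulVec_sub, neg_sub]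
  have hS₂ : S *ᵥ (bhat - bstar) = S *ᵥ (bhat - β) - S *ᵥ (bstar - β) := by
    simp only [mulVec_sub]; abel
  rw [hX, dotProduct_sub, mul_div_mul_left _ _ two_ne_zero, sub_div,
    dotProduct_comm (y - _) (ε - _)] at h1
  rw [hS₁, hS₂, neg_dotProduct, dotProduct_sub, mul_div_cancel_left₀ _ two_ne_zero,
    mulVec_dotProduct_mulVec, mulVec_dotProduct_mulVec, hS,
    dotProduct_comm (Sig *ᵥ _) (bstar - β)] at h2
  linarith

theorem mul_add_dotProduct_mulVec_le_of_isMinOn {n p : ℕ} {X : Matrix (Fin n) (Fin p) ℝ}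
    {ε y : Fin n → ℝ} {β : Fin p → ℝ} (hy : y = X *ᵥ β + ε) {g : (Fin p → ℝ) → ℝ}
    (hg : ConvexOn ℝ univ g) {S Sig : Matrix (Fin p) (Fin p) ℝ} (hS : Sᵀ * S = Sig)
    {bhat bstar : Fin p → ℝ}
    (hbhat : IsMinOn (fun b => (∑ i, (y i - X.mulVec b i) ^ 2) / (2 * (n : ℝ)) + g b) univ bhat)
    (hbstar : IsMinOn (fun b => (∑ i, S.mulVec (β - b) i ^ 2) / 2 + g b) univ bstar)
    {σ t s : ℝ} (hσ : σ ≠ 0) (ht : 0 ≤ t) {a : Fin p → ℝ} {γ : Fin n → ℝ}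
    (ha : s • a = Sig *ᵥ (bstar - β)) (hγ : s • γ = X *ᵥ (bstar - β)) :
    t * (σ ^ 2 + (bstar - β) ⬝ᵥ Sig *ᵥ (bstar - β))
      ≤ σ ^ 2 * (t - ε ⬝ᵥ (y - X *ᵥ bhat) / (n * σ ^ 2))
        + s * (t * (a ⬝ᵥ (bhat - β)) - γ ⬝ᵥ (X *ᵥ bhat - y) / n)
        + (1 + t) * ((ε - X *ᵥ (bstar - β)) ⬝ᵥ (y - X *ᵥ bhat) / n) := by
  have hmono := dotProduct_mulVec_add_residual_le_of_isMinOn hy hg hS hbhat hbstar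
  have hρ : 0 ≤ (y - X *ᵥ bhat) ⬝ᵥ (y - X *ᵥ bhat) / n := by
    rw [dotProduct_self_eq_sum_sq]; positivity
  have hσA : σ ^ 2 * (t - ε ⬝ᵥ (y - X *ᵥ bhat) / (n * σ ^ 2))
      = σ ^ 2 * t - ε ⬝ᵥ (y - X *ᵥ bhat) / n := by field_simp
  have hsa : s * (a ⬝ᵥ (bhat - β)) = Sig *ᵥ (bstar - β) ⬝ᵥ (bhat - β) := by
    rw [← ha, smul_dotProduct, smul_eq_mul]
  have hsγ : s * (γ ⬝ᵥ (X *ᵥ bhat - y)) = -(X *ᵥ (bstar - β) ⬝ᵥ (y - X *ᵥ bhat)) := by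
    rw [← hγ, smul_dotProduct, smul_eq_mul, ← neg_sub y, dotProduct_neg, mul_neg]
  have hsC : s * (t * (a ⬝ᵥ (bhat - β)) - γ ⬝ᵥ (X *ᵥ bhat - y) / n)
      = t * (Sig *ᵥ (bstar - β) ⬝ᵥ (bhat - β)) + X *ᵥ (bstar - β) ⬝ᵥ (y - X *ᵥ bhat) / n := by
    linear_combination t * hsa - hsγ / n
  rw [hσA, hsC]
  rw [sub_dotProduct ε] at hmono ⊢
  linear_combination mul_le_mul_of_nonneg_left hmono ht + mul_nonneg ht hρ

theorem deterministic_residual_lower_bound_general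
    (n p : ℕ) (X : Matrix (Fin n) (Fin p) ℝ) (ε : Fin n → ℝ) (β : Fin p → ℝ)
    (g : (Fin p → ℝ) → ℝ) (hg : ConvexOn ℝ Set.univ g)
    (Sig Ssq : Matrix (Fin p) (Fin p) ℝ) (hSig : Sig.PosDef)
    (hSsqSym : Ssqᵀ = Ssq) (hSsqSq : Ssq * Ssq = Sig)
    (σ : ℝ) (hσ : 0 < σ)
    (y : Fin n → ℝ) (hy : y = X.mulVec β + ε)
    (bhat : Fin p → ℝ)
    (hbhat : IsMinOn
      (fun b => (∑ i, (y i - X.mulVec b i) ^ 2) / (2 * (n : ℝ)) + g b) Set.univ bhat)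
    (bstar : Fin p → ℝ)
    (hbstar : IsMinOn
      (fun b => (∑ i, Ssq.mulVec (β - b) i ^ 2) / 2 + g b) Set.univ bstar)
    (h hstar : Fin p → ℝ) (hh : h = bhat - β) (hhs : hstar = bstar - β)
    (Rst : ℝ) (hRst : Rst = σ ^ 2 + ∑ i, Ssq.mulVec hstar i ^ 2)
    (Fp : ℝ)
    (hFp : Fp = max ((∑ i, X.mulVec hstar i ^ 2) / ((n : ℝ) * ∑ i, Ssq.mulVec hstar i ^ 2))
      (max ((∑ i, ε i ^ 2) / (σ ^ 2 * (n : ℝ)))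
        (max ((∑ i, (ε i - X.mulVec hstar i) ^ 2) / ((n : ℝ) * Rst)) 1)))
    (d : ℝ) (hd0 : 0 ≤ d) (hdn : d ≤ n)
    (gstar : Fin n → ℝ)
    (hgstar : gstar = (Real.sqrt (∑ i, Ssq.mulVec hstar i ^ 2))⁻¹ • X.mulVec hstar)
    (astar : Fin p → ℝ)
    (hastar : astar = (Real.sqrt (∑ i, Ssq.mulVec hstar i ^ 2))⁻¹ • Sig.mulVec hstar)
    (Δa Δb Δc : ℝ)
    (hΔa : Δa = σ ^ 2 *
      |(1 - d / n) - (∑ i, ε i * (y i - X.mulVec bhat i)) / ((n : ℝ) * σ ^ 2)| ^ 2 / Rst)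
    (hΔb : Δb = max (Fp - 1) 0 * (∑ i, (y i - X.mulVec bhat i) ^ 2) / ((n : ℝ) * Rst))
    (hΔc : Δc = |(1 - d / n) * (∑ j, astar j * h j) -
      (∑ i, gstar i * (X.mulVec bhat i - y i)) / n| ^ 2 / Rst) :
    (1 - d / (n : ℝ)) ^ 2 / 8
      ≤ (∑ i, (y i - X.mulVec bhat i) ^ 2) / ((n : ℝ) * Rst) + Δa + Δb + Δc := by
  subst hh hhs
  set s := √(∑ i, Ssq.mulVec (bstar - β) i ^ 2)
  set t := 1 - d / (n : ℝ)
  have hs2 : s ^ 2 = ∑ i, Ssq.mulVec (bstar - β) i ^ 2 := Real.sq_sqrt (by positivity)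
  have hss : ∑ i, Ssq.mulVec (bstar - β) i ^ 2 = (bstar - β) ⬝ᵥ Sig *ᵥ (bstar - β) := by
    rw [← dotProduct_self_eq_sum_sq, mulVec_dotProduct_mulVec, hSsqSym, hSsqSq, dotProduct_comm]
  -- `s = 0` forces `h* = 0`, so the convention `x / 0 = 0` in `a*` and `g*` does no harm.
  have hs0 : s = 0 → bstar - β = 0 := fun h0 =>
    hSig.eq_zero_of_dotProduct_mulVec_eq_zero (by rw [← hss, ← hs2, h0, sq, mul_zero])
  have hscale {m : ℕ} (M : Matrix (Fin m) (Fin p) ℝ) :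
      s • s⁻¹ • M *ᵥ (bstar - β) = M *ᵥ (bstar - β) := by
    rcases eq_or_ne s 0 with h0 | h0
    · simp [hs0 h0]
    · exact smul_inv_smul₀ h0 _
  have ht0 : 0 ≤ t := sub_nonneg.2 (div_le_one_of_le₀ hdn n.cast_nonneg)
  have ht1 : t ≤ 1 := sub_le_self _ (div_nonneg hd0 n.cast_nonneg)
  have hkey := mul_add_dotProduct_mulVec_le_of_isMinOn hy hg
    (show Ssqᵀ * Ssq = Sig by rw [hSsqSym, hSsqSq]) hbhat hbstar hσ.ne' ht0
    (a := astar) (γ := gstar) (by rw [hastar, hscale]) (by rw [hgstar, hscale])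
  rw [← hss, ← hRst] at hkey
  have hR : 0 < Rst := by rw [hRst, ← hs2]; positivity
  have hρ : 0 ≤ (∑ i, (y i - X.mulVec bhat i) ^ 2) / ((n : ℝ) * Rst) := by positivity
  rw [hΔb, mul_div_assoc]
  refine (sq_div_eight_le_of_mul_le_add (E := Δa + Δc) (F := Fp) hR ht0 ht1 hρ hkey ?_ ?_).trans_eq
    (by ring)
  · rw [hΔa, hΔc, sq_abs, sq_abs, ← add_div, hRst, ← hs2]
    exact sq_mul_add_mul_div_le (by positivity)
  · rw [div_div]
    refine (dotProduct_div_sq_le _ _ _).trans (mul_le_mul_of_nonneg_right ?_ hρ)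
    rw [hFp]
    exact le_max_of_le_right (le_max_of_le_right (le_max_left _ _))

/-- **Deterministic lower bound on the normalized residual.** -/
theorem deterministic_residual_lower_bound
    (n p : ℕ) (X : Matrix (Fin n) (Fin p) ℝ) (ε : Fin n → ℝ) (β : Fin p → ℝ)
    (g : (Fin p → ℝ) → ℝ) (hg : ConvexOn ℝ Set.univ g)
    (Sig Ssq : Matrix (Fin p) (Fin p) ℝ) (hSig : Sig.PosDef)
    (hSsqPD : Ssq.PosDef) (hSsqSym : Ssqᵀ = Ssq) (hSsqSq : Ssq * Ssq = Sig)
    (σ : ℝ) (hσ : 0 < σ)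
    (y : Fin n → ℝ) (hy : y = X.mulVec β + ε)
    (bhat : Fin p → ℝ)
    (hbhat : IsMinOn
      (fun b => (∑ i, (y i - X.mulVec b i) ^ 2) / (2 * (n : ℝ)) + g b) Set.univ bhat)
    (bstar : Fin p → ℝ)
    (hbstar : IsMinOn
      (fun b => (∑ i, Ssq.mulVec (β - b) i ^ 2) / 2 + g b) Set.univ bstar)
    (h hstar : Fin p → ℝ) (hh : h = bhat - β) (hhs : hstar = bstar - β)
    (Rst : ℝ) (hRst : Rst = σ ^ 2 + ∑ i, Ssq.mulVec hstar i ^ 2)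
    (Fp : ℝ)
    (hFp : Fp = max ((∑ i, X.mulVec hstar i ^ 2) / ((n : ℝ) * ∑ i, Ssq.mulVec hstar i ^ 2))
      (max ((∑ i, ε i ^ 2) / (σ ^ 2 * (n : ℝ)))
        (max ((∑ i, (ε i - X.mulVec hstar i) ^ 2) / ((n : ℝ) * Rst)) 1)))
    (d : ℝ) (hd0 : 0 ≤ d) (hdn : d ≤ n)
    (gstar : Fin n → ℝ)
    (hgstar : gstar = (Real.sqrt (∑ i, Ssq.mulVec hstar i ^ 2))⁻¹ • X.mulVec hstar)
    (astar : Fin p → ℝ)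
    (hastar : astar = (Real.sqrt (∑ i, Ssq.mulVec hstar i ^ 2))⁻¹ • Sig.mulVec hstar)
    (Δa Δb Δc : ℝ)
    (hΔa : Δa = σ ^ 2 *
      |(1 - d / n) - (∑ i, ε i * (y i - X.mulVec bhat i)) / ((n : ℝ) * σ ^ 2)| ^ 2 / Rst)
    (hΔb : Δb = max (Fp - 1) 0 * (∑ i, (y i - X.mulVec bhat i) ^ 2) / ((n : ℝ) * Rst))
    (hΔc : Δc = |(1 - d / n) * (∑ j, astar j * h j) -
      (∑ i, gstar i * (X.mulVec bhat i - y i)) / n| ^ 2 / Rst) :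
    (1 - d / (n : ℝ)) ^ 2 / 8
      ≤ (∑ i, (y i - X.mulVec bhat i) ^ 2) / ((n : ℝ) * Rst) + Δa + Δb + Δc :=
  deterministic_residual_lower_bound_general n p X ε β g hg Sig Ssq hSig hSsqSym hSsqSq σ hσ y hy
    bhat hbhat bstar hbstar h hstar hh hhs Rst hRst Fp hFp d hd0 hdn gstar hgstar astar hastar Δa Δb
    Δc hΔa hΔb hΔc
end
end
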